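/- Let S ⊂ ℤ^n be a realizable set and (Ĝ, Ŵ) its canonical realization. Then Ŵ is a resolving set of Ĝ, i.e., for any two distinct vertices x, y ∈ S there exists ω ∈ Ŵ with d_Ĝ(x, ω) ≠ d_Ĝ(y, ω). -/

import Mathlib

/-- A finite set `S ⊂ ℤ^n` is realizable if: (1) every `x ∈ S` has nonnegative
coordinates with at most one coordinate equal to zero; (2) for every `i` there is
exactly one `x ∈ S` with `x i = 0`; (3) if `x ∈ S` and `x i > 0` then there is
`y ∈ S` with `y i = x i - 1` and `max_j |y j - x j| ≤ 1`. -/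
def Realizable {n : ℕ} (S : Finset (Fin n → ℤ)) : Prop :=
  (∀ x ∈ S, (∀ i, 0 ≤ x i) ∧ ∀ i j, x i = 0 → x j = 0 → i = j) ∧
  (∀ i : Fin n, ∃! x, x ∈ S ∧ x i = 0) ∧
  (∀ x ∈ S, ∀ i : Fin n, 0 < x i →
    ∃ y ∈ S, y i = x i - 1 ∧ ∀ j, |y j - x j| ≤ 1)

/-- `max_{i ∈ [n]} |x i - y i| = 1`. -/
def maxDiffOne {n : ℕ} (x y : Fin n → ℤ) : Prop :=
  (∀ i, |x i - y i| ≤ 1) ∧ ∃ i, |x i - y i| = 1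

/-- The canonical realization `Ĝ` of `S`: vertex set `S`, edges `xy` iff
`max_i |x i - y i| = 1`. -/
def canonicalGraph {n : ℕ} (S : Finset (Fin n → ℤ)) : SimpleGraph {x // x ∈ S} where
  Adj x y := maxDiffOne x.1 y.1
  symm := by
    constructor
    rintro x y ⟨h1, i, hi⟩
    exact ⟨fun j => by rw [abs_sub_comm]; exact h1 j, i, by rwa [abs_sub_comm]⟩
  loopless := by
    constructor
    rintro x ⟨-, i, hi⟩
    simp at hi

/-- `(G, W)` is a realization of `S` (with `V(G) = S`): `G` is connected and for
every `u ∈ S` and every `ω ∈ S` with `ω i = 0` (i.e. `ω = ω^i ∈ W`),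
`d_G(u, ω) = u i`. -/
def IsRealization {n : ℕ} (S : Finset (Fin n → ℤ)) (G : SimpleGraph {x // x ∈ S}) : Prop :=
  G.Connected ∧
  ∀ (u w : {x // x ∈ S}) (i : Fin n), w.1 i = 0 → (G.dist u w : ℤ) = u.1 i


/-!
Every coordinate `v ↦ v i` changes by at most one along an edge of `Ĝ`, so `d(u, ω) ≥ u i`
whenever `ω i = 0`. Conversely, the descent axiom of a realizable set gives, from any `u`, a
walk of length `u i` along which coordinate `i` drops by one per step; it must end at the
unique vertex `ωⁱ` of `S` whose `i`-th coordinate vanishes. Hence `d(u, ωⁱ) = u i`, and two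
distinct vertices, which differ in some coordinate `i`, are resolved by `ωⁱ`.
-/

namespace SimpleGraph

variable {V : Type*} {G : SimpleGraph V}

theorem Walk.abs_sub_le_length (f : V → ℤ) (hf : ∀ u v, G.Adj u v → |f u - f v| ≤ 1)
    {a b : V} (p : G.Walk a b) : |f a - f b| ≤ p.length := by
  induction p with
  | nil => simp
  | @cons u v w h p ih =>
    calc |f u - f w| ≤ |f u - f v| + |f v - f w| := abs_sub_le _ _ _
      _ ≤ 1 + p.length := add_le_add (hf u v h) ih
      _ = (p.cons h).length := by push_cast [Walk.length_cons]; ring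

theorem Reachable.abs_sub_le_dist (f : V → ℤ) (hf : ∀ u v, G.Adj u v → |f u - f v| ≤ 1)
    {a b : V} (hab : G.Reachable a b) : |f a - f b| ≤ G.dist a b := by
  obtain ⟨p, hp⟩ := hab.exists_walk_length_eq_dist
  exact hp ▸ p.abs_sub_le_length f hf

end SimpleGraph

namespace Realizable

variable {n : ℕ} {S : Finset (Fin n → ℤ)}

theorem coord_nonneg (hS : Realizable S) {x : Fin n → ℤ} (hx : x ∈ S) (i : Fin n) :
    0 ≤ x i :=
  (hS.1 x hx).1 i

theorem exists_mem_coord_eq_zero (hS : Realizable S) (i : Fin n) : ∃ x ∈ S, x i = 0 :=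
  let ⟨x, hx, _⟩ := hS.2.1 i
  ⟨x, hx⟩

theorem eq_of_coord_eq_zero (hS : Realizable S) {x y : Fin n → ℤ} (hx : x ∈ S) (hy : y ∈ S)
    {i : Fin n} (hxi : x i = 0) (hyi : y i = 0) : x = y :=
  (hS.2.1 i).unique ⟨hx, hxi⟩ ⟨hy, hyi⟩

theorem exists_adj_coord_pred (hS : Realizable S) (u : {x // x ∈ S}) {i : Fin n}
    (hu : 0 < u.1 i) : ∃ v, (canonicalGraph S).Adj u v ∧ v.1 i = u.1 i - 1 := by
  obtain ⟨y, hyS, hyi, hy⟩ := hS.2.2 u.1 u.2 i hu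
  refine ⟨⟨y, hyS⟩, ⟨fun j => abs_sub_comm (y j) (u.1 j) ▸ hy j, i, ?_⟩, hyi⟩
  simp [hyi]

end Realizable

section canonicalGraph

variable {n : ℕ} {S : Finset (Fin n → ℤ)}

theorem canonicalGraph_abs_coord_sub_le_one {u v : {x // x ∈ S}} (h : (canonicalGraph S).Adj u v)
    (i : Fin n) : |u.1 i - v.1 i| ≤ 1 :=
  h.1 i

theorem Realizable.exists_walk_length_eq_coord (hS : Realizable S) {i : Fin n}
    {w : {x // x ∈ S}} (hw : w.1 i = 0) :
    ∀ (k : ℕ) (u : {x // x ∈ S}), u.1 i = k → ∃ p : (canonicalGraph S).Walk u w, p.length = k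
  | 0, u, hu => by
    obtain rfl : u = w := Subtype.ext (hS.eq_of_coord_eq_zero u.2 w.2 hu hw)
    exact ⟨.nil, rfl⟩
  | k + 1, u, hu => by
    obtain ⟨v, huv, hv⟩ := hS.exists_adj_coord_pred u (i := i) (by omega)
    obtain ⟨p, hp⟩ := hS.exists_walk_length_eq_coord hw k v (by omega)
    exact ⟨p.cons huv, by simp [hp]⟩

theorem Realizable.dist_canonicalGraph_eq_coord (hS : Realizable S) (u : {x // x ∈ S})
    {w : {x // x ∈ S}} {i : Fin n} (hw : w.1 i = 0) :
    ((canonicalGraph S).dist u w : ℤ) = u.1 i := by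
  obtain ⟨k, hk⟩ := Int.eq_ofNat_of_zero_le (hS.coord_nonneg u.2 i)
  obtain ⟨p, hp⟩ := hS.exists_walk_length_eq_coord hw k u hk
  have upper := SimpleGraph.dist_le p
  have lower := p.reachable.abs_sub_le_dist (fun v => v.1 i)
    fun _ _ h => canonicalGraph_abs_coord_sub_le_one h i
  rw [hw, sub_zero, abs_of_nonneg (hS.coord_nonneg u.2 i)] at lower
  omega

end canonicalGraph

/-- `Ŵ = {x ∈ S : some coordinate of x is 0}` is a resolving set of
the canonical realization `Ĝ`: any two distinct vertices are resolved by some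
vertex of `Ŵ`. -/
theorem canonicalGraph_resolving {n : ℕ} (S : Finset (Fin n → ℤ)) (hS : Realizable S)
    (x y : {v // v ∈ S}) (hxy : x ≠ y) :
    ∃ w : {v // v ∈ S}, (∃ i : Fin n, w.1 i = 0) ∧
      (canonicalGraph S).dist x w ≠ (canonicalGraph S).dist y w := by
  obtain ⟨i, hi⟩ := Function.ne_iff.mp (Subtype.coe_injective.ne hxy)
  obtain ⟨z, hzS, hzi⟩ := hS.exists_mem_coord_eq_zero i
  refine ⟨⟨z, hzS⟩, ⟨i, hzi⟩, fun h => hi ?_⟩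
  rw [← hS.dist_canonicalGraph_eq_coord x (w := ⟨z, hzS⟩) hzi,
    ← hS.dist_canonicalGraph_eq_coord y (w := ⟨z, hzS⟩) hzi, h]
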